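/- In a COM, two faces F(X) and F(Y) are parallel (i.e., each is the metric projection of the other) if and only if the supports of X and Y are equal. -/

import Mathlib

open Finset
open scoped Classical

variable {U : Type*}

/-- Hamming distance between two vertices of the hypercube `U → Bool`. -/
def hDist [Fintype U] [DecidableEq U] (x y : U → Bool) : ℕ :=
  (Finset.univ.filter fun i => x i ≠ y i).card

/-- The hypercube graph on `U → Bool`: two vertices are adjacent iff they differ
in exactly one coordinate. -/
def cubeGraph (U : Type*) [Fintype U] [DecidableEq U] : SimpleGraph (U → Bool) where
  Adj x y := hDist x y = 1
  symm := by
    constructor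
    intro x y h
    have hs : (Finset.univ.filter fun i => y i ≠ x i) =
        (Finset.univ.filter fun i => x i ≠ y i) := by
      apply Finset.filter_congr
      intro i _
      exact ne_comm
    simpa [hDist, hs] using h
  loopless := by
    constructor
    intro x h
    simp [hDist] at h

/-- Distance between `x` and `y` inside the subgraph of the hypercube induced by `A`
(`0` if one of them is not in `A`). -/
noncomputable def dIn [Fintype U] [DecidableEq U] (A : Set (U → Bool)) (x y : U → Bool) : ℕ :=
  if h : x ∈ A ∧ y ∈ A then ((cubeGraph U).induce A).dist ⟨x, h.1⟩ ⟨y, h.2⟩ else 0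

/-- A set of vertices of the hypercube is a partial cube if its induced graph is connected
and the induced graph distance coincides with the Hamming distance
(i.e. it is an isometric subgraph of the hypercube). -/
def IsPartialCube [Fintype U] [DecidableEq U] (A : Set (U → Bool)) : Prop :=
  ((cubeGraph U).induce A).Connected ∧ ∀ x ∈ A, ∀ y ∈ A, dIn A x y = hDist x y

/-- `A` shatters the coordinate set `X`. -/
def Shatters [Fintype U] [DecidableEq U] (A : Set (U → Bool)) (X : Finset U) : Prop :=
  ∀ g : U → Bool, ∃ a ∈ A, ∀ i ∈ X, a i = g i

/-- `A` strongly shatters `X`: it contains a full subcube over the coordinates `X`. -/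
def StronglyShatters [Fintype U] [DecidableEq U] (A : Set (U → Bool)) (X : Finset U) : Prop :=
  ∃ a : U → Bool, ∀ g : U → Bool, (fun i => if i ∈ X then g i else a i) ∈ A

/-- An ample set family: every shattered set is strongly shattered. -/
def IsAmple [Fintype U] [DecidableEq U] (A : Set (U → Bool)) : Prop :=
  ∀ X : Finset U, Shatters A X → StronglyShatters A X

/-- Composition of sign vectors: `(X ∘ Y) e = X e` if `X e ≠ 0`, else `Y e`. -/
def comp (X Y : U → SignType) : U → SignType := fun e => if X e = 0 then Y e else X e

/-- The support of a sign vector. -/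
def supp (X : U → SignType) : Set U := {e | X e ≠ 0}

/-- The separator of two sign vectors. -/
def sep [Fintype U] [DecidableEq U] (X Y : U → SignType) : Finset U :=
  Finset.univ.filter fun e => X e * Y e = -1

/-- A complex of oriented matroids: face symmetry and strong elimination. -/
structure IsCOM (L : Set (U → SignType)) : Prop where
  fs : ∀ X ∈ L, ∀ Y ∈ L, comp X (-Y) ∈ L
  se : ∀ X ∈ L, ∀ Y ∈ L, ∀ e : U, X e * Y e = -1 →
      ∃ Z ∈ L, Z e = 0 ∧ ∀ f : U, X f * Y f ≠ -1 → Z f = comp X Y f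

/-- An oriented matroid: composition, strong elimination and symmetry. -/
structure IsOM (L : Set (U → SignType)) : Prop where
  c : ∀ X ∈ L, ∀ Y ∈ L, comp X Y ∈ L
  se : ∀ X ∈ L, ∀ Y ∈ L, ∀ e : U, X e * Y e = -1 →
      ∃ Z ∈ L, Z e = 0 ∧ ∀ f : U, X f * Y f ≠ -1 → Z f = comp X Y f
  sym : ∀ X ∈ L, -X ∈ L

/-- A simple system of sign vectors. -/
def SimpleSV (L : Set (U → SignType)) : Prop :=
  (∀ e : U, ∀ s : SignType, ∃ X ∈ L, X e = s) ∧
  ∀ e f : U, e ≠ f → (∃ X ∈ L, X e * X f = 1) ∧ (∃ Y ∈ L, Y e * Y f = -1)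

/-- The topes of a system of sign vectors: the covectors with full support. -/
def Topes (L : Set (U → SignType)) : Set (U → SignType) := {X ∈ L | ∀ e, X e ≠ 0}

/-- Conversion of a (full support) sign vector to a vertex of the hypercube. -/
def tb (X : U → SignType) : U → Bool := fun e => decide (X e = 1)

/-- The vertex set of the tope graph inside the hypercube. -/
def TopeSet (L : Set (U → SignType)) : Set (U → Bool) := tb '' Topes L

/-- The face of a covector `X`. -/
def face (L : Set (U → SignType)) (X : U → SignType) : Set (U → SignType) :=
  {Z | ∃ Y ∈ L, Z = comp X Y}

/-- The topes of the face `F(X)`: the topes of `L` lying in the cube `C(X)`, i.e. agreeing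
with `X` on the support of `X`. -/
def faceTopes (L : Set (U → SignType)) (X : U → SignType) : Set (U → SignType) :=
  {Z ∈ Topes L | ∀ e, X e ≠ 0 → Z e = X e}

/-- The distance between the faces `F(X)` and `F(Y)` in the tope graph. -/
noncomputable def faceDist [Fintype U] [DecidableEq U]
    (L : Set (U → SignType)) (X Y : U → SignType) : ℕ :=
  sInf {n | ∃ A ∈ faceTopes L X, ∃ B ∈ faceTopes L Y, dIn (TopeSet L) (tb A) (tb B) = n}


/-! The tope graph of a simple COM is a partial cube. Given topes `T ≠ T'` separated in at
least two coordinates, strong elimination at some `e ∈ S(T, T')` yields `Z` with `Z e = 0`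
agreeing with `T` off the separator; one of `Z ∘ T`, `Z ∘ (-T)` lies strictly between `T` and
`T'`, unless `Z` vanishes on the whole separator, in which case simplicity supplies a `W` with
`W e W f = -(T e T f)` and `Z ∘ W ∘ T` does. Hence graph distances between topes are the sizes
of separators, and the distance between `F(X)` and `F(Y)` is `|S(X, Y)|`, attained by
`X ∘ Y ∘ T` and `Y ∘ X ∘ T`.

If `supp Y ⊆ supp X`, every tope `A` of `F(X)` is at that distance from `Y ∘ A ∈ F(Y)`.
If `e ∈ supp Y \ supp X`, the tope `X ∘ -(Y ∘ T)` of `F(X)` is separated from each tope of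
`F(Y)` by `S(X, Y)` and also by `e`, so it is too far from `F(Y)`. -/

open SimpleGraph

namespace SignType

theorem mul_eq_neg_one_iff {a b : SignType} : a * b = -1 ↔ a ≠ 0 ∧ b = -a := by
  revert a b; decide

end SignType

section Composition

variable {L : Set (U → SignType)} {X Y T : U → SignType}

theorem comp_apply_of_ne_zero {e : U} (h : X e ≠ 0) : comp X Y e = X e := if_neg h

theorem comp_apply_of_eq_zero {e : U} (h : X e = 0) : comp X Y e = Y e := if_pos h

theorem comp_ne_zero (hY : ∀ e, Y e ≠ 0) (e : U) : comp X Y e ≠ 0 := by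
  by_cases h : X e = 0
  · rw [comp_apply_of_eq_zero h]; exact hY e
  · rwa [comp_apply_of_ne_zero h]

-- `X ∘ -(X ∘ -Y) = X ∘ Y`
theorem IsCOM.comp_mem (hL : IsCOM L) (hX : X ∈ L) (hY : Y ∈ L) : comp X Y ∈ L := by
  convert hL.fs X hX _ (hL.fs X hX Y hY) using 1
  funext e
  by_cases h : X e = 0 <;> simp [comp, h]

theorem IsCOM.comp_mem_topes (hL : IsCOM L) (hX : X ∈ L) (hT : T ∈ Topes L) :
    comp X T ∈ Topes L :=
  ⟨hL.comp_mem hX hT.1, comp_ne_zero hT.2⟩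

theorem IsCOM.comp_neg_mem_topes (hL : IsCOM L) (hX : X ∈ L) (hT : T ∈ Topes L) :
    comp X (-T) ∈ Topes L :=
  ⟨hL.fs X hX T hT.1, comp_ne_zero fun e => by
    rw [Pi.neg_apply, Ne, SignType.neg_eq_zero_iff]; exact hT.2 e⟩

theorem comp_mem_faceTopes (hT : comp X T ∈ Topes L) : comp X T ∈ faceTopes L X :=
  ⟨hT, fun _ he => comp_apply_of_ne_zero he⟩

theorem IsCOM.topes_nonempty [Fintype U] (hL : IsCOM L) (hs : SimpleSV L) (hX : X ∈ L) :
    (Topes L).Nonempty := by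
  suffices h : ∀ s : Finset U, ∃ W ∈ L, ∀ e ∈ s, W e ≠ 0 by
    obtain ⟨W, hW, hW0⟩ := h Finset.univ
    exact ⟨W, hW, fun e => hW0 e (Finset.mem_univ e)⟩
  intro s
  induction s using Finset.induction_on with
  | empty => exact ⟨X, hX, by simp⟩
  | insert a s _ ih =>
    obtain ⟨W, hW, hW0⟩ := ih
    obtain ⟨V, hV, hVa⟩ := hs.1 a 1
    refine ⟨comp W V, hL.comp_mem hW hV, fun e he => ?_⟩
    by_cases hWe : W e = 0
    · obtain rfl : e = a := (Finset.mem_insert.mp he).resolve_right fun h => hW0 e h hWe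
      rw [comp_apply_of_eq_zero hWe, hVa]
      decide
    · rwa [comp_apply_of_ne_zero hWe]

end Composition

section Separator

variable [Fintype U] [DecidableEq U] {X Y T T' V : U → SignType} {e : U}

theorem mem_sep : e ∈ sep X Y ↔ X e ≠ 0 ∧ Y e = -X e := by
  simp [sep, SignType.mul_eq_neg_one_iff]

theorem sep_comm (X Y : U → SignType) : sep X Y = sep Y X := by
  ext e
  simp only [sep, Finset.mem_filter, mul_comm]

theorem ne_of_mem_sep (h : e ∈ sep X Y) : X e ≠ Y e := by
  have key : ∀ a : SignType, a ≠ 0 → a ≠ -a := by decide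
  obtain ⟨hX, hY⟩ := mem_sep.mp h
  exact hY ▸ key _ hX

theorem sep_nonempty_of_ne (hX : ∀ e, X e ≠ 0) (hY : ∀ e, Y e ≠ 0) (h : X ≠ Y) :
    (sep X Y).Nonempty := by
  obtain ⟨e, he⟩ := Function.ne_iff.mp h
  have key : ∀ a b : SignType, a ≠ 0 → b ≠ 0 → a ≠ b → b = -a := by decide
  exact ⟨e, mem_sep.mpr ⟨hX e, key _ _ (hX e) (hY e) he⟩⟩

theorem card_sep_add_card_sep (hT : ∀ e, T e ≠ 0) (hV : ∀ e, V e ≠ 0)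
    (hVT : ∀ g ∉ sep T T', V g = T g) :
    (sep T V).card + (sep V T').card = (sep T T').card := by
  have key : ∀ t t' v : SignType, t ≠ 0 → v ≠ 0 → (¬(t ≠ 0 ∧ t' = -t) → v = t) →
      ((v = -t ↔ (t ≠ 0 ∧ t' = -t) ∧ v ≠ t) ∧
        (t' = -v ↔ (t ≠ 0 ∧ t' = -t) ∧ ¬v ≠ t)) := by
    intro t t' v; cases t <;> cases t' <;> cases v <;> decide
  have hVT' g := key _ (T' g) _ (hT g) (hV g) (hVT g ∘ mem_sep.not.mpr)
  have h₁ : sep T V = (sep T T').filter fun g => V g ≠ T g := by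
    ext g
    simpa [mem_sep, hT g] using (hVT' g).1
  have h₂ : sep V T' = (sep T T').filter fun g => ¬V g ≠ T g := by
    ext g
    simpa [mem_sep, hT g, hV g] using (hVT' g).2
  rw [h₁, h₂, Finset.card_filter_add_card_filter_not]

end Separator

section PartialCube

variable [Fintype U] [DecidableEq U] {L : Set (U → SignType)} {T T' : U → SignType}

theorem hDist_tb (hT : ∀ e, T e ≠ 0) (hT' : ∀ e, T' e ≠ 0) :
    hDist (tb T) (tb T') = (sep T T').card := by
  have key : ∀ a b : SignType, a ≠ 0 → b ≠ 0 →
      (decide (a = 1) ≠ decide (b = 1) ↔ a ≠ 0 ∧ b = -a) := by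
    intro a b; cases a <;> cases b <;> decide
  unfold hDist
  congr 1
  ext e
  simpa [tb, mem_sep] using key _ _ (hT e) (hT' e)

theorem hDist_le_length {S : Set (U → Bool)} {x y : S} (w : ((cubeGraph U).induce S).Walk x y) :
    hDist x.1 y.1 ≤ w.length := by
  induction w with
  | nil => simp [hDist]
  | @cons x y z h _ ih =>
    have hadj : hDist x.1 y.1 = 1 := h
    have htri : hDist x.1 z.1 ≤ hDist x.1 y.1 + hDist y.1 z.1 := hammingDist_triangle _ _ _
    rw [Walk.length_cons]
    omega

theorem IsCOM.exists_eq_zero_eqOn_compl_sep (hL : IsCOM L) (hT : T ∈ Topes L)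
    (hT' : T' ∈ Topes L) {e : U} (he : e ∈ sep T T') :
    ∃ Z ∈ L, Z e = 0 ∧ ∀ g ∉ sep T T', Z g = T g := by
  obtain ⟨Z, hZ, hZe, hZT⟩ := hL.se T hT.1 T' hT'.1 e (by simpa [sep] using he)
  refine ⟨Z, hZ, hZe, fun g hg => ?_⟩
  rw [hZT g (by simpa [sep] using hg), comp_apply_of_ne_zero (hT.2 g)]

theorem IsCOM.exists_tope_strictly_between_of_eq_zero (hL : IsCOM L) (hs : SimpleSV L)
    (hT : T ∈ Topes L) {Z : U → SignType} (hZ : Z ∈ L)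
    (hZT : ∀ g ∉ sep T T', Z g = T g) (hZ0 : ∀ g ∈ sep T T', Z g = 0)
    {e f : U} (he : e ∈ sep T T') (hf : f ∈ sep T T') (hef : e ≠ f) :
    ∃ V ∈ Topes L, (∀ g ∉ sep T T', V g = T g) ∧ V ≠ T ∧ V ≠ T' := by
  have hsign : ∀ a b : SignType, a ≠ 0 → b ≠ 0 → a * b = 1 ∨ a * b = -1 := by decide
  obtain ⟨W, hW, hWef⟩ : ∃ W ∈ L, W e * W f = -(T e * T f) := by
    rcases hsign _ _ (hT.2 e) (hT.2 f) with h | h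
    · obtain ⟨W, hW, hWef⟩ := (hs.2 e f hef).2
      exact ⟨W, hW, by rw [hWef, h]⟩
    · obtain ⟨W, hW, hWef⟩ := (hs.2 e f hef).1
      exact ⟨W, hW, by rw [hWef, h, neg_neg]⟩
  have hTT : T e * T f ≠ -(T e * T f) := by
    have key : ∀ c d : SignType, c ≠ 0 → d ≠ 0 → c * d ≠ -(c * d) := by decide
    exact key _ _ (hT.2 e) (hT.2 f)
  obtain ⟨hWe, hWf⟩ : W e ≠ 0 ∧ W f ≠ 0 := by
    have key : ∀ a b c : SignType, (c = 1 ∨ c = -1) → a * b = -c → a ≠ 0 ∧ b ≠ 0 := by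
      decide
    exact key _ _ _ (hsign _ _ (hT.2 e) (hT.2 f)) hWef
  have hV : comp Z (comp W T) e * comp Z (comp W T) f = -(T e * T f) := by
    rw [comp_apply_of_eq_zero (hZ0 e he), comp_apply_of_eq_zero (hZ0 f hf),
      comp_apply_of_ne_zero hWe, comp_apply_of_ne_zero hWf, hWef]
  refine ⟨comp Z (comp W T), hL.comp_mem_topes hZ (hL.comp_mem_topes hW hT), fun g hg => ?_,
    fun h => hTT (by rwa [h] at hV), fun h => hTT ?_⟩
  · rw [comp_apply_of_ne_zero (by rw [hZT g hg]; exact hT.2 g), hZT g hg]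
  · rw [h, (mem_sep.mp he).2, (mem_sep.mp hf).2, neg_mul_neg] at hV
    exact hV

theorem IsCOM.exists_tope_strictly_between (hL : IsCOM L) (hs : SimpleSV L)
    (hT : T ∈ Topes L) (hT' : T' ∈ Topes L) (h : 1 < (sep T T').card) :
    ∃ V ∈ Topes L, (∀ g ∉ sep T T', V g = T g) ∧ V ≠ T ∧ V ≠ T' := by
  obtain ⟨e, he, f, hf, hef⟩ := Finset.one_lt_card.mp h
  obtain ⟨Z, hZ, hZe, hZT⟩ := hL.exists_eq_zero_eqOn_compl_sep hT hT' he
  have hoff : ∀ W, ∀ g ∉ sep T T', comp Z W g = T g := fun W g hg => by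
    rw [comp_apply_of_ne_zero (by rw [hZT g hg]; exact hT.2 g), hZT g hg]
  by_cases h₁ : ∃ g ∈ sep T T', Z g = T' g
  · obtain ⟨g, hg, hZg⟩ := h₁
    refine ⟨comp Z T, hL.comp_mem_topes hZ hT, hoff T, fun hV => ?_, fun hV => ?_⟩
    · have := congrFun hV g
      rw [comp_apply_of_ne_zero (by rw [hZg]; exact hT'.2 g), hZg] at this
      exact ne_of_mem_sep hg this.symm
    · have := congrFun hV e
      rw [comp_apply_of_eq_zero hZe] at this
      exact ne_of_mem_sep he this
  by_cases h₂ : ∃ g ∈ sep T T', Z g = T g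
  · obtain ⟨g, hg, hZg⟩ := h₂
    refine ⟨comp Z (-T), hL.comp_neg_mem_topes hZ hT, hoff (-T), fun hV => ?_, fun hV => ?_⟩
    · have := congrFun hV e
      rw [comp_apply_of_eq_zero hZe, Pi.neg_apply, ← (mem_sep.mp he).2] at this
      exact ne_of_mem_sep he this.symm
    · have := congrFun hV g
      rw [comp_apply_of_ne_zero (by rw [hZg]; exact hT.2 g), hZg] at this
      exact ne_of_mem_sep hg this
  push Not at h₁ h₂
  refine hL.exists_tope_strictly_between_of_eq_zero hs hT hZ hZT (fun g hg => ?_) he hf hef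
  have key : ∀ z t : SignType, t ≠ 0 → z ≠ -t → z ≠ t → z = 0 := by decide
  exact key _ _ (hT.2 g) ((mem_sep.mp hg).2 ▸ h₁ g hg) (h₂ g hg)

theorem IsCOM.exists_walk_length_eq_card_sep (hL : IsCOM L) (hs : SimpleSV L) (n : ℕ) :
    ∀ {T T' : U → SignType} (hT : T ∈ Topes L) (hT' : T' ∈ Topes L), (sep T T').card = n →
      ∃ w : ((cubeGraph U).induce (TopeSet L)).Walk
        ⟨tb T, Set.mem_image_of_mem tb hT⟩ ⟨tb T', Set.mem_image_of_mem tb hT'⟩,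
        w.length = n := by
  induction n using Nat.strong_induction_on with
  | _ n ih =>
  intro T T' hT hT' hn
  rcases lt_trichotomy n 1 with h0 | rfl | h2
  · obtain rfl : T = T' := by
      by_contra h
      have := (sep_nonempty_of_ne hT.2 hT'.2 h).card_pos
      omega
    exact ⟨Walk.nil, by rw [Walk.length_nil]; omega⟩
  · have hadj : ((cubeGraph U).induce (TopeSet L)).Adj
        ⟨tb T, Set.mem_image_of_mem tb hT⟩ ⟨tb T', Set.mem_image_of_mem tb hT'⟩ :=
      (hDist_tb hT.2 hT'.2).trans hn
    exact ⟨hadj.toWalk, rfl⟩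
  · obtain ⟨V, hV, hVT, hVne, hVne'⟩ := hL.exists_tope_strictly_between hs hT hT' (hn ▸ h2)
    have hsum := card_sep_add_card_sep (T' := T') hT.2 hV.2 hVT
    have h₁ := (sep_nonempty_of_ne hT.2 hV.2 (Ne.symm hVne)).card_pos
    have h₂ := (sep_nonempty_of_ne hV.2 hT'.2 hVne').card_pos
    obtain ⟨w₁, hw₁⟩ := ih _ (by omega) hT hV rfl
    obtain ⟨w₂, hw₂⟩ := ih _ (by omega) hV hT' rfl
    exact ⟨w₁.append w₂, by rw [Walk.length_append, hw₁, hw₂]; omega⟩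

theorem IsCOM.dIn_tb (hL : IsCOM L) (hs : SimpleSV L) (hT : T ∈ Topes L) (hT' : T' ∈ Topes L) :
    dIn (TopeSet L) (tb T) (tb T') = (sep T T').card := by
  obtain ⟨w, hw⟩ := hL.exists_walk_length_eq_card_sep hs _ hT hT' rfl
  obtain ⟨w', hw'⟩ := w.reachable.exists_walk_length_eq_dist
  rw [dIn, dif_pos ⟨Set.mem_image_of_mem tb hT, Set.mem_image_of_mem tb hT'⟩]
  refine le_antisymm (hw ▸ dist_le w) ?_
  rw [← hw', ← hDist_tb hT.2 hT'.2]
  exact hDist_le_length w'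

end PartialCube

theorem dIn_comm [Fintype U] [DecidableEq U] (S : Set (U → Bool)) (x y : U → Bool) :
    dIn S x y = dIn S y x := by
  unfold dIn
  by_cases h : x ∈ S ∧ y ∈ S
  · rw [dif_pos h, dif_pos h.symm, dist_comm]
  · rw [dif_neg h, dif_neg fun h' => h h'.symm]

theorem faceDist_comm [Fintype U] [DecidableEq U] (L : Set (U → SignType))
    (X Y : U → SignType) :
    faceDist L X Y = faceDist L Y X := by
  unfold faceDist
  congr 1
  ext n
  constructor <;> rintro ⟨A, hA, B, hB, rfl⟩ <;> exact ⟨B, hB, A, hA, dIn_comm _ _ _⟩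

section Faces

variable [Fintype U] [DecidableEq U] {L : Set (U → SignType)} {X Y A B : U → SignType}

theorem sep_subset_sep (hA : ∀ e, X e ≠ 0 → A e = X e) (hB : ∀ e, Y e ≠ 0 → B e = Y e) :
    sep X Y ⊆ sep A B := by
  intro e he
  obtain ⟨hXe, hYe⟩ := mem_sep.mp he
  have hYe0 : Y e ≠ 0 := by rwa [hYe, Ne, SignType.neg_eq_zero_iff]
  rw [mem_sep, hA e hXe, hB e hYe0]
  exact ⟨hXe, hYe⟩

theorem sep_comp_comp (X Y T : U → SignType) :
    sep (comp X (comp Y T)) (comp Y (comp X T)) = sep X Y := by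
  have key : ∀ x y t : SignType,
      ((if x = 0 then (if y = 0 then t else y) else x) * (if y = 0 then (if x = 0 then t else x)
        else y) = -1) ↔ x * y = -1 := by decide
  ext e
  simpa [sep, comp] using key (X e) (Y e) (T e)

theorem sep_comp_eq_sep (hA : ∀ e, X e ≠ 0 → A e = X e) (h : supp Y ⊆ supp X) :
    sep A (comp Y A) = sep X Y := by
  have key : ∀ x y a : SignType, (x ≠ 0 → a = x) → (y ≠ 0 → x ≠ 0) →
      (a * (if y = 0 then a else y) = -1 ↔ x * y = -1) := by decide
  ext e
  simpa [sep, comp] using key (X e) (Y e) (A e) (hA e) (@h e)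

theorem card_sep_lt_card_sep_comp_neg (hA : ∀ e, X e ≠ 0 → A e = X e) {e : U}
    (hXe : X e ≠ 0) (hYe : Y e = 0) (T : U → SignType) :
    (sep X Y).card < (sep A (comp Y (-comp X T))).card := by
  refine Finset.card_lt_card ((Finset.ssubset_iff_of_subset
    (sep_subset_sep hA fun _ => comp_apply_of_ne_zero)).mpr ⟨e, ?_, ?_⟩)
  · rw [mem_sep, comp_apply_of_eq_zero hYe, Pi.neg_apply, comp_apply_of_ne_zero hXe, hA e hXe]
    exact ⟨hXe, rfl⟩
  · rw [mem_sep, hYe, eq_comm, SignType.neg_eq_zero_iff]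
    exact fun h => h.1 h.2

theorem IsCOM.faceDist_eq (hL : IsCOM L) (hs : SimpleSV L) (hX : X ∈ L) (hY : Y ∈ L) :
    faceDist L X Y = (sep X Y).card := by
  obtain ⟨T, hT⟩ := hL.topes_nonempty hs hX
  have hA := comp_mem_faceTopes (hL.comp_mem_topes hX (hL.comp_mem_topes hY hT))
  have hB := comp_mem_faceTopes (hL.comp_mem_topes hY (hL.comp_mem_topes hX hT))
  refine le_antisymm
    (Nat.sInf_le ⟨_, hA, _, hB, by rw [hL.dIn_tb hs hA.1 hB.1, sep_comp_comp]⟩) ?_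
  refine le_csInf ⟨_, _, hA, _, hB, rfl⟩ ?_
  rintro n ⟨A, hA, B, hB, rfl⟩
  rw [hL.dIn_tb hs hA.1 hB.1]
  exact Finset.card_le_card (sep_subset_sep hA.2 hB.2)

-- In the paper's notation, `pr_{F(Y)}(F(X)) = F(X)`.
def FaceIsProj (L : Set (U → SignType)) (X Y : U → SignType) : Prop :=
  ∀ A ∈ faceTopes L X, ∃ B ∈ faceTopes L Y, dIn (TopeSet L) (tb A) (tb B) = faceDist L X Y

theorem IsCOM.faceIsProj_iff (hL : IsCOM L) (hs : SimpleSV L) (hX : X ∈ L) (hY : Y ∈ L) :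
    FaceIsProj L X Y ↔ supp Y ⊆ supp X := by
  refine ⟨fun h e hYe => ?_, fun h A hA => ?_⟩
  · by_contra hXe
    obtain ⟨T, hT⟩ := hL.topes_nonempty hs hX
    have hB := comp_mem_faceTopes (hL.comp_neg_mem_topes hX (hL.comp_mem_topes hY hT))
    obtain ⟨A, hA, hBA⟩ := h _ hB
    rw [hL.dIn_tb hs hB.1 hA.1, hL.faceDist_eq hs hX hY, sep_comm _ A, sep_comm X] at hBA
    exact (card_sep_lt_card_sep_comp_neg hA.2 hYe (not_not.mp hXe) T).ne hBA.symm
  · refine ⟨comp Y A, comp_mem_faceTopes (hL.comp_mem_topes hY hA.1), ?_⟩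
    rw [hL.dIn_tb hs hA.1 (hL.comp_mem_topes hY hA.1), hL.faceDist_eq hs hX hY,
      sep_comp_eq_sep hA.2 h]

end Faces

theorem stmt13_general [Fintype U] [DecidableEq U] (L : Set (U → SignType))
    (hcom : IsCOM L) (hsimple : SimpleSV L)
    (X : U → SignType) (hX : X ∈ L) (Y : U → SignType) (hY : Y ∈ L) :
    ((∀ A ∈ faceTopes L X, ∃ B ∈ faceTopes L Y,
        dIn (TopeSet L) (tb A) (tb B) = faceDist L X Y) ∧
     (∀ B ∈ faceTopes L Y, ∃ A ∈ faceTopes L X,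
        dIn (TopeSet L) (tb A) (tb B) = faceDist L X Y)) ↔
      supp X = supp Y := by
  have hYX : (∀ B ∈ faceTopes L Y, ∃ A ∈ faceTopes L X,
      dIn (TopeSet L) (tb A) (tb B) = faceDist L X Y) ↔ FaceIsProj L Y X :=
    forall₂_congr fun B _ => exists_congr fun A => and_congr_right fun _ => by
      rw [dIn_comm, faceDist_comm]
  change FaceIsProj L X Y ∧ _ ↔ _
  rw [hYX, hcom.faceIsProj_iff hsimple hX hY, hcom.faceIsProj_iff hsimple hY hX,
    Set.Subset.antisymm_iff, and_comm]

/-- In a (simple) COM, two faces `F(X)` and `F(Y)` are parallel (each is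
the metric projection of the other) if and only if `X` and `Y` have the same support. -/
theorem stmt13 [Fintype U] [DecidableEq U] (L : Set (U → SignType))
    (hcom : IsCOM L) (hsimple : SimpleSV L) (hne : L.Nonempty)
    (X : U → SignType) (hX : X ∈ L) (Y : U → SignType) (hY : Y ∈ L) :
    ((∀ A ∈ faceTopes L X, ∃ B ∈ faceTopes L Y,
        dIn (TopeSet L) (tb A) (tb B) = faceDist L X Y) ∧
     (∀ B ∈ faceTopes L Y, ∃ A ∈ faceTopes L X,
        dIn (TopeSet L) (tb A) (tb B) = faceDist L X Y)) ↔
      supp X = supp Y :=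
  stmt13_general L hcom hsimple X hX Y hY
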